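/- Let P be the convex hull of the finite family of joint distributions {P_ij} where P_ij(x,y) = p_i(x)q_j(y|x), for i in a finite index set I and j in a finite index set J. Then the TV diameter of P satisfies max(η_X, η*_{Y|X}) ≤ diam_TV(P), where η_X = max_{i,i'} d_TV(p_i, p_{i'}) and η*_{Y|X} = max_i max_{j,j'} Σ_x p_i(x) d_TV(q_j(·|x), q_{j'}(·|x)). -/

import Mathlib

open Finset

/-! Every joint distribution `P i j` is a vertex of the credal set, and the credal set lies in
the probability simplex, where the TV distance is at most one. So the diameter is the supremum of
a bounded set (which matters: `sSup` of an unbounded set of reals is `0`) containing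
`d_TV(P i j, P i' j')` for all indices. Two choices of vertices realise the two terms: sharing
the kernel `q j` gives `d_TV(P i j, P i' j) = d_TV(p i, p i')`, and sharing the marginal `p i`
gives `d_TV(P i j, P i j') = ∑ x, p i x * d_TV(q j x, q j' x)`. -/

section

variable {α X Y : Type*} [Fintype α] [Fintype X] [Fintype Y]

noncomputable def tvDist (μ ν : α → ℝ) : ℝ := (1 / 2) * ∑ a, |μ a - ν a|

noncomputable def tvDiam (C : Set (α → ℝ)) : ℝ :=
  sSup {d | ∃ μ ∈ C, ∃ ν ∈ C, tvDist μ ν = d}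

def jointDist (p : X → ℝ) (q : X → Y → ℝ) : X × Y → ℝ := fun z => p z.1 * q z.1 z.2

lemma tvDist_le_one {μ ν : α → ℝ} (hμ : μ ∈ stdSimplex ℝ α) (hν : ν ∈ stdSimplex ℝ α) :
    tvDist μ ν ≤ 1 := by
  have h : ∑ a, |μ a - ν a| ≤ ∑ a, (μ a + ν a) :=
    sum_le_sum fun a _ => abs_sub_le_iff.2 ⟨by linarith [hν.1 a], by linarith [hμ.1 a]⟩
  rw [sum_add_distrib, hμ.2, hν.2] at h
  unfold tvDist
  linarith

lemma tvDist_le_tvDiam {C : Set (α → ℝ)} (hC : C ⊆ stdSimplex ℝ α) {μ ν : α → ℝ}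
    (hμ : μ ∈ C) (hν : ν ∈ C) : tvDist μ ν ≤ tvDiam C :=
  le_csSup ⟨1, by rintro _ ⟨μ, hμ, ν, hν, rfl⟩; exact tvDist_le_one (hC hμ) (hC hν)⟩
    ⟨μ, hμ, ν, hν, rfl⟩

lemma mixture_mem_stdSimplex {ι : Type*} [Fintype ι] {w : ι → ℝ} (hw : w ∈ stdSimplex ℝ ι)
    {P : ι → α → ℝ} (hP : ∀ i, P i ∈ stdSimplex ℝ α) :
    (fun a => ∑ i, w i * P i a) ∈ stdSimplex ℝ α := by
  convert (convex_stdSimplex ℝ α).sum_mem (fun i _ => hw.1 i) hw.2 fun i _ => hP i using 1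
  ext a
  simp [Finset.sum_apply]

lemma jointDist_mem_stdSimplex {p : X → ℝ} {q : X → Y → ℝ} (hp : p ∈ stdSimplex ℝ X)
    (hq : ∀ x, q x ∈ stdSimplex ℝ Y) : jointDist p q ∈ stdSimplex ℝ (X × Y) :=
  ⟨fun z => mul_nonneg (hp.1 z.1) ((hq z.1).1 z.2), by
    simp [jointDist, Fintype.sum_prod_type, ← mul_sum, fun x => (hq x).2, hp.2]⟩

lemma tvDist_jointDist_left (p p' : X → ℝ) {q : X → Y → ℝ} (hq : ∀ x, q x ∈ stdSimplex ℝ Y) :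
    tvDist (jointDist p q) (jointDist p' q) = tvDist p p' := by
  unfold tvDist jointDist
  rw [Fintype.sum_prod_type]
  congr 1
  refine sum_congr rfl fun x _ => ?_
  simp_rw [← sub_mul, abs_mul, abs_of_nonneg ((hq x).1 _), ← mul_sum, (hq x).2, mul_one]

lemma tvDist_jointDist_right {p : X → ℝ} (hp : ∀ x, 0 ≤ p x) (q q' : X → Y → ℝ) :
    tvDist (jointDist p q) (jointDist p q') = ∑ x, p x * tvDist (q x) (q' x) := by
  unfold tvDist jointDist
  rw [Fintype.sum_prod_type, mul_sum]
  refine sum_congr rfl fun x _ => ?_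
  simp_rw [← mul_sub, abs_mul, abs_of_nonneg (hp x), ← mul_sum]
  ring

end

/-- Diameter lower bound: the TV diameter of the structured credal set is at least the
maximum of the covariate diameter η_X and the maximal expected label disagreement η*_{Y|X}. -/
theorem diameter_lower_bound
    {X Y I J : Type} [Fintype X] [Fintype Y] [Fintype I] [Fintype J]
    [Nonempty I] [Nonempty J]
    (p : I → X → ℝ) (q : J → X → Y → ℝ)
    (hp0 : ∀ i x, 0 ≤ p i x) (hp1 : ∀ i, ∑ x, p i x = 1)
    (hq0 : ∀ j x y, 0 ≤ q j x y) (hq1 : ∀ j x, ∑ y, q j x y = 1) :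
    let P : I → J → X × Y → ℝ := fun i j z => p i z.1 * q j z.1 z.2
    let C : Set (X × Y → ℝ) :=
      {μ | ∃ w : I → J → ℝ, (∀ i j, 0 ≤ w i j) ∧ (∑ i, ∑ j, w i j = 1) ∧
            μ = fun z => ∑ i, ∑ j, w i j * P i j z}
    max (⨆ i, ⨆ i', (1/2) * ∑ x, |p i x - p i' x|)
        (⨆ i, ⨆ j, ⨆ j', ∑ x, p i x * ((1/2) * ∑ y, |q j x y - q j' x y|))
      ≤ sSup {d | ∃ μ ∈ C, ∃ ν ∈ C, (1/2) * ∑ z, |μ z - ν z| = d} := by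
  intro P C
  have hq : ∀ j x, q j x ∈ stdSimplex ℝ Y := fun j x => ⟨hq0 j x, hq1 j x⟩
  have hC : C ⊆ stdSimplex ℝ (X × Y) := by
    rintro μ ⟨w, hw0, hw1, rfl⟩
    simp_rw [← Fintype.sum_prod_type']
    exact mixture_mem_stdSimplex ⟨fun k : I × J => hw0 k.1 k.2, by rwa [Fintype.sum_prod_type']⟩
      fun k : I × J => jointDist_mem_stdSimplex ⟨hp0 k.1, hp1 k.1⟩ (hq k.2)
  have hvert : ∀ i j, jointDist (p i) (q j) ∈ C := by
    classical
    exact fun i j => ⟨fun i' j' => if i' = i then if j' = j then 1 else 0 else 0,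
      fun _ _ => by positivity, by simp, by ext z; simp [P, jointDist]⟩
  have hle : ∀ i j i' j', tvDist (jointDist (p i) (q j)) (jointDist (p i') (q j')) ≤ tvDiam C :=
    fun i j i' j' => tvDist_le_tvDiam hC (hvert i j) (hvert i' j')
  change max (⨆ i, ⨆ i', tvDist (p i) (p i'))
      (⨆ i, ⨆ j, ⨆ j', ∑ x, p i x * tvDist (q j x) (q j' x)) ≤ tvDiam C
  obtain ⟨j₀⟩ := ‹Nonempty J›
  refine max_le (ciSup_le fun i => ciSup_le fun i' => ?_)
    (ciSup_le fun i => ciSup_le fun j => ciSup_le fun j' => ?_)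
  · simpa only [tvDist_jointDist_left _ _ (hq j₀)] using hle i j₀ i' j₀
  · simpa only [tvDist_jointDist_right (hp0 i)] using hle i j i j'
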